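/- Under the iterative singular value thresholding algorithm with step size τ ∈ (0, 1/max_{it}x_{it}²), the objective gap to the global minimum (Θ̃, M̃) of F satisfies F(Θ_{k+1}, M_{k+1}) − F(Θ̃, M̃) ≤ (1/(kτ)) ‖Θ₁ − Θ̃‖_F² for all k ≥ 1; in particular the objective values converge to the global minimum at rate O(1/k). -/

import Mathlib

open Matrix BigOperators

/-- Squared Frobenius norm of a real matrix. -/
noncomputable def frobSq {m n : ℕ} (A : Matrix (Fin m) (Fin n) ℝ) : ℝ :=
  ∑ i, ∑ j, A i j ^ 2

/-- Singular values of a real matrix: square roots of the eigenvalues of `Aᴴ * A`. -/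
noncomputable def singVals {m n : ℕ} (A : Matrix (Fin m) (Fin n) ℝ) : Fin n → ℝ :=
  fun j => Real.sqrt ((show (Aᵀ * A).IsHermitian by
    simpa using Matrix.isHermitian_conjTranspose_mul_self A).eigenvalues j)

/-- Nuclear norm: sum of the singular values. -/
noncomputable def nuclearNorm {m n : ℕ} (A : Matrix (Fin m) (Fin n) ℝ) : ℝ :=
  ∑ j, singVals A j

/-- Operator (spectral) norm: largest singular value. -/
noncomputable def opNorm {m n : ℕ} (A : Matrix (Fin m) (Fin n) ℝ) : ℝ :=
  ⨆ j, singVals A j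

/-- `B` is the output of the soft singular value thresholding operator `S_lam` applied to `A`,
characterized by its proximal property: `S_lam A` is the minimizer of
`‖A − B‖_F² + 2·lam·‖B‖ₙ` (cf. Statement 9). -/
def IsSVT {N T : ℕ} (lam : ℝ) (A B : Matrix (Fin N) (Fin T) ℝ) : Prop :=
  ∀ C : Matrix (Fin N) (Fin T) ℝ,
    frobSq (A - B) + 2 * lam * nuclearNorm B ≤ frobSq (A - C) + 2 * lam * nuclearNorm C

/-- The nuclear-norm penalized objective `F(Θ, M)`. -/
noncomputable def Fobj {N T : ℕ} (Y X : Matrix (Fin N) (Fin T) ℝ) (ν₁ ν₂ : ℝ)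
    (Θ M : Matrix (Fin N) (Fin T) ℝ) : ℝ :=
  frobSq (Y - M - X ⊙ Θ) + ν₂ * nuclearNorm M + ν₁ * nuclearNorm Θ

/-!
The `Θ`-update is a proximal gradient step with step size `τ` for `Θ ↦ F(Θ, M_k) / 2`, whose
smooth part has a `(max x_{it}²)`-Lipschitz gradient, and `max x_{it}² ≤ 1/τ`; the `M`-update
minimizes `F` exactly. As the nuclear norm is convex, `S_λ` is the proximal map of a convex
function, and the three-point inequality of proximal maps gives, for every `j ≥ 1` and every
comparison point `(C, M_C)`,
  `τ F(Θ_{j+1}, M_{j+1}) ≤ τ F(C, M_C) + ‖Θ_j − C‖² − ‖Θ_{j+1} − C‖²`.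
With `C = Θ_j` this shows that `F` decreases along the iteration; with `C = Θ̃` the right-hand
sides telescope, and monotonicity bounds `kτ (F(Θ_{k+1}, M_{k+1}) − F(Θ̃, M̃))` by their sum.

Convexity of the nuclear norm comes from `‖A‖ₙ = ∑ⱼ ⟨uⱼ, A vⱼ⟩` for the singular vectors of `A`,
together with `∑ᵢ ⟨pᵢ, A qᵢ⟩ ≤ ‖A‖ₙ` for all families `p`, `q` satisfying Bessel's inequality.
-/

open Set Filter Topology RealInnerProductSpace

section Prox

variable {E : Type*} [NormedAddCommGroup E] [InnerProductSpace ℝ E] {g : E → ℝ} {a b : E}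

theorem ConvexOn.two_inner_le_of_prox (hg : ConvexOn ℝ univ g)
    (hb : ∀ x, ‖a - b‖ ^ 2 + g b ≤ ‖a - x‖ ^ 2 + g x) (c : E) :
    2 * ⟪a - b, c - b⟫ ≤ g c - g b := by
  set L := 2 * ⟪a - b, c - b⟫ - (g c - g b)
  have hsmall : ∀ t ∈ Ioo (0 : ℝ) 1, L ≤ t * ‖c - b‖ ^ 2 := by
    rintro t ⟨ht0, ht1⟩
    have hconv : g ((1 - t) • b + t • c) ≤ (1 - t) * g b + t * g c :=
      hg.2 (mem_univ b) (mem_univ c) (by linarith) ht0.le (by ring)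
    have hnorm : ‖a - ((1 - t) • b + t • c)‖ ^ 2 =
        ‖a - b‖ ^ 2 - 2 * t * ⟪a - b, c - b⟫ + t ^ 2 * ‖c - b‖ ^ 2 := by
      rw [show a - ((1 - t) • b + t • c) = (a - b) - t • (c - b) by module, norm_sub_sq_real,
        inner_smul_right, norm_smul, mul_pow, Real.norm_eq_abs, sq_abs]
      ring
    have : t * L ≤ t * (t * ‖c - b‖ ^ 2) := by linarith [hb ((1 - t) • b + t • c)]
    exact le_of_mul_le_mul_left this ht0
  have hlim : Tendsto (fun t : ℝ => t * ‖c - b‖ ^ 2) (𝓝[>] 0) (𝓝 0) := by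
    have : Tendsto (fun t : ℝ => t * ‖c - b‖ ^ 2) (𝓝 0) (𝓝 (0 * ‖c - b‖ ^ 2)) :=
      (continuous_id.mul continuous_const).tendsto 0
    simpa using this.mono_left nhdsWithin_le_nhds
  have : L ≤ 0 := ge_of_tendsto hlim (eventually_of_mem (Ioo_mem_nhdsGT one_pos) hsmall)
  linarith

theorem ConvexOn.prox_three_point (hg : ConvexOn ℝ univ g)
    (hb : ∀ x, ‖a - b‖ ^ 2 + g b ≤ ‖a - x‖ ^ 2 + g x) (c : E) :
    ‖a - b‖ ^ 2 + g b + ‖b - c‖ ^ 2 ≤ ‖a - c‖ ^ 2 + g c := by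
  have h := hg.two_inner_le_of_prox hb c
  rw [show a - c = (a - b) - (c - b) by abel, norm_sub_sq_real (a - b), norm_sub_rev b c]
  linarith

end Prox

section ProximalGradient

variable {E : Type*} [NormedAddCommGroup E] [InnerProductSpace ℝ E]
  {L : E →ₗ[ℝ] E} {g h : E → ℝ} {τ : ℝ}

theorem prox_gradient_step (hL : L.IsSymmetric) (hτ : 0 ≤ τ)
    (hτL : ∀ u, τ * ‖L u‖ ^ 2 ≤ ‖u‖ ^ 2) (hg : ConvexOn ℝ univ g) {y θ θ' : E}
    (hθ' : ∀ x, ‖θ - τ • L (L θ - y) - θ'‖ ^ 2 + τ * g θ' ≤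
      ‖θ - τ • L (L θ - y) - x‖ ^ 2 + τ * g x) (c : E) :
    τ * (‖y - L θ'‖ ^ 2 + g θ') ≤
      τ * (‖y - L θ‖ ^ 2 + 2 * ⟪L (L θ - y), c - θ⟫ + g c) + ‖θ - c‖ ^ 2 - ‖θ' - c‖ ^ 2 := by
  set G := L (L θ - y)
  have descent :
      τ * ‖y - L θ'‖ ^ 2 ≤ τ * ‖y - L θ‖ ^ 2 + 2 * τ * ⟪G, θ' - θ⟫ + ‖θ - θ'‖ ^ 2 := by
    have hG : ⟪y - L θ, L (θ' - θ)⟫ = -⟪G, θ' - θ⟫ := by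
      rw [← hL, ← inner_neg_left, ← map_neg, neg_sub]
    rw [show y - L θ' = (y - L θ) - L (θ' - θ) by rw [map_sub]; abel, norm_sub_sq_real, hG,
      norm_sub_rev θ θ']
    linarith [hτL (θ' - θ)]
  have three_point := (hg.smul hτ).prox_three_point (by simpa only [smul_eq_mul] using hθ') c
  have expand : ∀ z, ‖θ - τ • G - z‖ ^ 2 =
      ‖θ - z‖ ^ 2 + 2 * τ * ⟪G, z - θ⟫ + τ ^ 2 * ‖G‖ ^ 2 := fun z => by
    rw [show θ - τ • G - z = (θ - z) - τ • G by abel, norm_sub_sq_real, inner_smul_right,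
      norm_smul, mul_pow, Real.norm_eq_abs, sq_abs, real_inner_comm, ← neg_sub z θ,
      inner_neg_right]
    ring
  simp only [smul_eq_mul, expand] at three_point
  linarith

theorem prox_subgradient (hL : L.IsSymmetric) (hh : ConvexOn ℝ univ h) {y θ m : E}
    (hm : ∀ x, ‖y - L θ - m‖ ^ 2 + h m ≤ ‖y - L θ - x‖ ^ 2 + h x) (c mc : E) :
    ‖y - m - L θ‖ ^ 2 + h m + 2 * ⟪L (L θ - (y - m)), c - θ⟫ ≤ ‖y - mc - L c‖ ^ 2 + h mc := by
  set w := y - L θ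
  set δ := L (θ - c)
  have three_point := hh.prox_three_point hm mc
  have hG : ⟪L (L θ - (y - m)), c - θ⟫ = ⟪w - m, δ⟫ := by
    rw [hL, show L θ - (y - m) = -(w - m) by simp only [w]; abel, inner_neg_left,
      ← inner_neg_right, ← map_neg, neg_sub]
  have hcross : ⟪w - mc, δ⟫ = ⟪w - m, δ⟫ + ⟪m - mc, δ⟫ := by
    rw [← inner_add_left, sub_add_sub_cancel]
  have hsq : 0 ≤ ‖m - mc‖ ^ 2 + 2 * ⟪m - mc, δ⟫ + ‖δ‖ ^ 2 :=
    norm_add_sq_real (m - mc) δ ▸ sq_nonneg _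
  rw [show y - m - L θ = w - m by simp only [w]; abel,
    show y - mc - L c = (w - mc) + δ by simp only [w, δ, map_sub]; abel, hG, norm_add_sq_real]
  linarith

theorem alternating_prox_step (hL : L.IsSymmetric) (hτ : 0 ≤ τ)
    (hτL : ∀ u, τ * ‖L u‖ ^ 2 ≤ ‖u‖ ^ 2) (hg : ConvexOn ℝ univ g) (hh : ConvexOn ℝ univ h)
    {y θ θ' m m' : E}
    (hθ' : ∀ x, ‖θ - τ • L (L θ - y + m) - θ'‖ ^ 2 + τ * g θ' ≤
      ‖θ - τ • L (L θ - y + m) - x‖ ^ 2 + τ * g x)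
    (hm : ∀ x, ‖y - L θ - m‖ ^ 2 + h m ≤ ‖y - L θ - x‖ ^ 2 + h x)
    (hm' : ∀ x, ‖y - L θ' - m'‖ ^ 2 + h m' ≤ ‖y - L θ' - x‖ ^ 2 + h x) (c mc : E) :
    τ * (‖y - m' - L θ'‖ ^ 2 + h m' + g θ') ≤
      τ * (‖y - mc - L c‖ ^ 2 + h mc + g c) + ‖θ - c‖ ^ 2 - ‖θ' - c‖ ^ 2 := by
  rw [show L θ - y + m = L θ - (y - m) by abel] at hθ'
  have hM : ‖y - m' - L θ'‖ ^ 2 + h m' ≤ ‖y - m - L θ'‖ ^ 2 + h m := by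
    simpa only [sub_right_comm y] using hm' m
  have hΘ := prox_gradient_step hL hτ hτL hg hθ' c
  have hsub := prox_subgradient hL hh hm c mc
  linarith [mul_le_mul_of_nonneg_left hM hτ, mul_le_mul_of_nonneg_left hsub hτ]

end ProximalGradient

theorem Antitone.succ_mul_le_of_le_sub {e d : ℕ → ℝ} (he : Antitone e) (hd : ∀ n, 0 ≤ d n)
    (hstep : ∀ n, e n ≤ d n - d (n + 1)) (n : ℕ) : (n + 1) * e n ≤ d 0 := by
  suffices (n + 1) * e n ≤ d 0 - d (n + 1) by linarith [hd (n + 1)]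
  induction n with
  | zero => simpa using hstep 0
  | succ n ih =>
    have := mul_le_mul_of_nonneg_left (he n.le_succ) (by positivity : (0 : ℝ) ≤ n + 1)
    push_cast
    linarith [hstep (n + 1)]

section NuclearNorm

theorem sum_sq_dotProduct_le {ι κ : Type*} [Fintype ι] [Fintype κ] (f : ι → κ → ℝ)
    (horth : Pairwise fun i j => f i ⬝ᵥ f j = 0) (hle : ∀ i, f i ⬝ᵥ f i ≤ 1) (w : κ → ℝ) :
    ∑ i, (f i ⬝ᵥ w) ^ 2 ≤ w ⬝ᵥ w := by
  set S := ∑ i, (f i ⬝ᵥ w) • f i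
  have hfS : ∀ i, f i ⬝ᵥ S = (f i ⬝ᵥ w) * (f i ⬝ᵥ f i) := fun i => by
    rw [dotProduct_sum, Finset.sum_eq_single i
      (fun j _ hji => by rw [dotProduct_smul, horth hji.symm, smul_zero]) (by simp),
      dotProduct_smul, smul_eq_mul]
  have hwS : w ⬝ᵥ S = ∑ i, (f i ⬝ᵥ w) ^ 2 := by
    rw [dotProduct_comm, sum_dotProduct]
    simp only [smul_dotProduct, smul_eq_mul, sq]
  have hSS : S ⬝ᵥ S ≤ ∑ i, (f i ⬝ᵥ w) ^ 2 := by
    simp only [S, sum_dotProduct, smul_dotProduct, hfS, smul_eq_mul]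
    refine Finset.sum_le_sum fun i _ => ?_
    nlinarith [hle i, sq_nonneg (f i ⬝ᵥ w)]
  have := dotProduct_star_self_nonneg (w - S)
  simp only [star_trivial, sub_dotProduct, dotProduct_sub, dotProduct_comm S w, hwS] at this
  linarith

variable {m n : ℕ} (A : Matrix (Fin m) (Fin n) ℝ)

theorem isHermitian_transpose_mul_self : (Aᵀ * A).IsHermitian := by
  simpa using isHermitian_conjTranspose_mul_self A

noncomputable def rightSingVec (j : Fin n) : Fin n → ℝ :=
  (isHermitian_transpose_mul_self A).eigenvectorBasis j

/-- Since `0⁻¹ = 0`, this vanishes when the singular value does. -/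
noncomputable def leftSingVec (j : Fin n) : Fin m → ℝ :=
  (singVals A j)⁻¹ • (A *ᵥ rightSingVec A j)

theorem rightSingVec_dotProduct (i j : Fin n) :
    rightSingVec A i ⬝ᵥ rightSingVec A j = if i = j then 1 else 0 := by
  have := orthonormal_iff_ite.1 (isHermitian_transpose_mul_self A).eigenvectorBasis.orthonormal i j
  simpa [rightSingVec, EuclideanSpace.inner_eq_star_dotProduct, dotProduct_comm] using this

theorem sum_rightSingVec (w : Fin n → ℝ) :
    ∑ j, (rightSingVec A j ⬝ᵥ w) • rightSingVec A j = w := by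
  have := congrArg WithLp.ofLp
    ((isHermitian_transpose_mul_self A).eigenvectorBasis.sum_repr' (WithLp.toLp 2 w))
  simpa [rightSingVec, EuclideanSpace.inner_eq_star_dotProduct, dotProduct_comm] using this

theorem mulVec_rightSingVec_dotProduct (i j : Fin n) :
    (A *ᵥ rightSingVec A i) ⬝ᵥ (A *ᵥ rightSingVec A j) =
      if i = j then singVals A j ^ 2 else 0 := by
  have eigen : ∀ i j, (A *ᵥ rightSingVec A i) ⬝ᵥ (A *ᵥ rightSingVec A j) =
      (isHermitian_transpose_mul_self A).eigenvalues j * if i = j then 1 else 0 := fun i j => by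
    rw [← rightSingVec_dotProduct, ← smul_eq_mul, ← dotProduct_smul, rightSingVec, rightSingVec,
      ← (isHermitian_transpose_mul_self A).mulVec_eigenvectorBasis, ← mulVec_mulVec,
      dotProduct_mulVec _ Aᵀ, vecMul_transpose]
  split_ifs with hij
  · subst hij
    have hnonneg := eigen i i
    simp only [↓reduceIte, mul_one] at hnonneg
    rw [eigen, if_pos rfl, mul_one, singVals, Real.sq_sqrt]
    exact hnonneg ▸ Finset.sum_nonneg fun _ _ => mul_self_nonneg _
  · rw [eigen, if_neg hij, mul_zero]

theorem mulVec_rightSingVec (j : Fin n) :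
    A *ᵥ rightSingVec A j = singVals A j • leftSingVec A j := by
  by_cases h : singVals A j = 0
  · rw [h, zero_smul, ← dotProduct_self_eq_zero, mulVec_rightSingVec_dotProduct, if_pos rfl, h]
    ring
  · rw [leftSingVec, smul_smul, mul_inv_cancel₀ h, one_smul]

theorem leftSingVec_dotProduct (i j : Fin n) :
    leftSingVec A i ⬝ᵥ leftSingVec A j =
      if i = j then (singVals A j)⁻¹ ^ 2 * singVals A j ^ 2 else 0 := by
  simp only [leftSingVec, dotProduct_smul, smul_dotProduct, mulVec_rightSingVec_dotProduct,
    smul_eq_mul]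
  split_ifs with h <;> simp [h, sq]; ring

theorem leftSingVec_dotProduct_self_le (j : Fin n) :
    leftSingVec A j ⬝ᵥ leftSingVec A j ≤ 1 := by
  rw [leftSingVec_dotProduct, if_pos rfl, ← mul_pow]
  by_cases h : singVals A j = 0 <;> simp [h]

theorem sum_sq_leftSingVec_dotProduct_le (w : Fin m → ℝ) :
    ∑ j, (leftSingVec A j ⬝ᵥ w) ^ 2 ≤ w ⬝ᵥ w :=
  sum_sq_dotProduct_le _ (fun i j hij => by simp [leftSingVec_dotProduct, hij])
    (leftSingVec_dotProduct_self_le A) w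

theorem sum_sq_rightSingVec_dotProduct_le (w : Fin n → ℝ) :
    ∑ j, (rightSingVec A j ⬝ᵥ w) ^ 2 ≤ w ⬝ᵥ w :=
  sum_sq_dotProduct_le _ (fun i j hij => by simp [rightSingVec_dotProduct, hij])
    (fun j => by simp [rightSingVec_dotProduct]) w

theorem mulVec_eq_sum_leftSingVec (w : Fin n → ℝ) :
    A *ᵥ w = ∑ j, (rightSingVec A j ⬝ᵥ w * singVals A j) • leftSingVec A j := by
  conv_lhs => rw [← sum_rightSingVec A w]
  simp only [mulVec_sum, mulVec_smul, mulVec_rightSingVec, smul_smul]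

theorem nuclearNorm_eq_sum_leftSingVec_dotProduct :
    nuclearNorm A = ∑ j, leftSingVec A j ⬝ᵥ (A *ᵥ rightSingVec A j) := by
  refine Finset.sum_congr rfl fun j _ => ?_
  rw [mulVec_rightSingVec, dotProduct_smul, leftSingVec_dotProduct, if_pos rfl, smul_eq_mul]
  by_cases h : singVals A j = 0 <;> field_simp [h]

theorem sum_dotProduct_mulVec_le_nuclearNorm {ι : Type*} [Fintype ι] (p : ι → Fin m → ℝ)
    (q : ι → Fin n → ℝ) (hp : ∀ w, ∑ i, (p i ⬝ᵥ w) ^ 2 ≤ w ⬝ᵥ w)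
    (hq : ∀ w, ∑ i, (q i ⬝ᵥ w) ^ 2 ≤ w ⬝ᵥ w) :
    ∑ i, p i ⬝ᵥ (A *ᵥ q i) ≤ nuclearNorm A := by
  have hunit : ∀ j, ∑ i, (q i ⬝ᵥ rightSingVec A j) * (p i ⬝ᵥ leftSingVec A j) ≤ 1 := fun j => by
    have hv := hq (rightSingVec A j)
    have hu := (hp (leftSingVec A j)).trans (leftSingVec_dotProduct_self_le A j)
    rw [rightSingVec_dotProduct, if_pos rfl] at hv
    calc ∑ i, (q i ⬝ᵥ rightSingVec A j) * (p i ⬝ᵥ leftSingVec A j)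
        ≤ ∑ i, ((q i ⬝ᵥ rightSingVec A j) ^ 2 + (p i ⬝ᵥ leftSingVec A j) ^ 2) / 2 :=
          Finset.sum_le_sum fun i _ => by
            linarith [two_mul_le_add_sq (q i ⬝ᵥ rightSingVec A j) (p i ⬝ᵥ leftSingVec A j)]
      _ ≤ 1 := by rw [← Finset.sum_div, Finset.sum_add_distrib]; linarith
  calc ∑ i, p i ⬝ᵥ (A *ᵥ q i)
      = ∑ j, singVals A j * ∑ i, (q i ⬝ᵥ rightSingVec A j) * (p i ⬝ᵥ leftSingVec A j) := by
        simp only [mulVec_eq_sum_leftSingVec, dotProduct_sum, dotProduct_smul, smul_eq_mul,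
          Finset.mul_sum]
        rw [Finset.sum_comm]
        refine Finset.sum_congr rfl fun j _ => Finset.sum_congr rfl fun i _ => ?_
        rw [dotProduct_comm (rightSingVec A j)]
        ring
    _ ≤ ∑ j, singVals A j * 1 :=
        Finset.sum_le_sum fun j _ => mul_le_mul_of_nonneg_left (hunit j) (Real.sqrt_nonneg _)
    _ = nuclearNorm A := by simp [nuclearNorm]

theorem convexOn_nuclearNorm : ConvexOn ℝ univ (nuclearNorm : Matrix (Fin m) (Fin n) ℝ → ℝ) := by
  refine ⟨convex_univ, fun P _ Q _ s t hs ht _ => ?_⟩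
  set B := s • P + t • Q
  have bound := fun C : Matrix (Fin m) (Fin n) ℝ => sum_dotProduct_mulVec_le_nuclearNorm C
    (leftSingVec B) (rightSingVec B) (sum_sq_leftSingVec_dotProduct_le B)
    (sum_sq_rightSingVec_dotProduct_le B)
  calc nuclearNorm B
      = s * ∑ j, leftSingVec B j ⬝ᵥ (P *ᵥ rightSingVec B j) +
          t * ∑ j, leftSingVec B j ⬝ᵥ (Q *ᵥ rightSingVec B j) := by
        simp only [nuclearNorm_eq_sum_leftSingVec_dotProduct B, B, add_mulVec, smul_mulVec,
          dotProduct_add, dotProduct_smul, smul_eq_mul, Finset.mul_sum, Finset.sum_add_distrib]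
    _ ≤ s • nuclearNorm P + t • nuclearNorm Q := by
        simp only [smul_eq_mul]
        gcongr
        exacts [bound P, bound Q]

end NuclearNorm

theorem frobSq_nonneg {m n : ℕ} (A : Matrix (Fin m) (Fin n) ℝ) : 0 ≤ frobSq A :=
  Finset.sum_nonneg fun _ _ => Finset.sum_nonneg fun _ _ => sq_nonneg _

section Frobenius

variable {m n : Type*} [Fintype m] [Fintype n]

noncomputable abbrev frobeniusInnerCore : InnerProductSpace.Core ℝ (Matrix m n ℝ) where
  inner A B := vec A ⬝ᵥ vec B
  conj_inner_symm A B := by simp [dotProduct_comm]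
  re_inner_nonneg A := by simpa using dotProduct_star_self_nonneg (vec A)
  add_left A B C := by simp [add_dotProduct]
  smul_left A B c := by simp [smul_dotProduct]
  definite A hA := by simpa using hA

/-- Its topology agrees with the product topology of matrices only propositionally, hence a local
instance. -/
noncomputable abbrev frobeniusInnerNormedAddCommGroup : NormedAddCommGroup (Matrix m n ℝ) :=
  frobeniusInnerCore.toNormedAddCommGroup

attribute [local instance] frobeniusInnerNormedAddCommGroup

noncomputable abbrev frobeniusInnerProductSpace : InnerProductSpace ℝ (Matrix m n ℝ) :=
  InnerProductSpace.ofCore frobeniusInnerCore.toCore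

attribute [local instance] frobeniusInnerProductSpace

theorem inner_eq_vec_dotProduct (A B : Matrix m n ℝ) : ⟪A, B⟫ = vec A ⬝ᵥ vec B := rfl

theorem frobSq_eq_norm_sq {m n : ℕ} (A : Matrix (Fin m) (Fin n) ℝ) : frobSq A = ‖A‖ ^ 2 := by
  rw [← real_inner_self_eq_norm_sq, inner_eq_vec_dotProduct, dotProduct, Fintype.sum_prod_type,
    Finset.sum_comm, frobSq]
  simp [sq]

@[simps]
def hadamardLeft (X : Matrix m n ℝ) : Matrix m n ℝ →ₗ[ℝ] Matrix m n ℝ where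
  toFun := (X ⊙ ·)
  map_add' B C := hadamard_add X B C
  map_smul' c B := hadamard_smul X B c

theorem isSymmetric_hadamardLeft (X : Matrix m n ℝ) : (hadamardLeft X).IsSymmetric := by
  intro A B
  simp only [inner_eq_vec_dotProduct, hadamardLeft_apply, vec_hadamard, dotProduct, Pi.mul_apply]
  exact Finset.sum_congr rfl fun _ _ => by ring

theorem mul_norm_hadamard_sq_le {c : ℝ} {X : Matrix m n ℝ} (hX : ∀ i j, c * X i j ^ 2 ≤ 1)
    (D : Matrix m n ℝ) : c * ‖X ⊙ D‖ ^ 2 ≤ ‖D‖ ^ 2 := by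
  simp only [← real_inner_self_eq_norm_sq, inner_eq_vec_dotProduct, vec_hadamard, dotProduct,
    Finset.mul_sum, Pi.mul_apply]
  refine Finset.sum_le_sum fun ji _ => ?_
  have := mul_le_mul_of_nonneg_right (hX ji.2 ji.1) (mul_self_nonneg (vec D ji))
  simp only [vec] at this ⊢
  linarith

theorem Fobj_step_le {N T : ℕ} {Y X : Matrix (Fin N) (Fin T) ℝ} {ν₁ ν₂ τ : ℝ} (hν₁ : 0 ≤ ν₁)
    (hν₂ : 0 ≤ ν₂) (hτ : 0 ≤ τ) (hτX : ∀ i t, τ * X i t ^ 2 ≤ 1)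
    {Θ Θ' M M' : Matrix (Fin N) (Fin T) ℝ}
    (hΘ' : IsSVT (τ * ν₁ / 2) (Θ - τ • (X ⊙ (X ⊙ Θ - Y + M))) Θ')
    (hM : IsSVT (ν₂ / 2) (Y - X ⊙ Θ) M) (hM' : IsSVT (ν₂ / 2) (Y - X ⊙ Θ') M')
    (C Mc : Matrix (Fin N) (Fin T) ℝ) :
    τ * Fobj Y X ν₁ ν₂ Θ' M' ≤ τ * Fobj Y X ν₁ ν₂ C Mc + frobSq (Θ - C) - frobSq (Θ' - C) := by
  have prox : ∀ {lam a : ℝ} {A B : Matrix (Fin N) (Fin T) ℝ}, IsSVT lam A B → 2 * lam = a →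
      ∀ x, ‖A - B‖ ^ 2 + a * nuclearNorm B ≤ ‖A - x‖ ^ 2 + a * nuclearNorm x := by
    rintro lam a A B h rfl x
    simpa only [frobSq_eq_norm_sq] using h x
  have hgrad := prox hΘ' (a := τ * ν₁) (by ring)
  simp only [Fobj, frobSq_eq_norm_sq]
  exact alternating_prox_step (L := hadamardLeft X) (g := fun x => ν₁ * nuclearNorm x)
    (isSymmetric_hadamardLeft X) hτ (mul_norm_hadamard_sq_le hτX)
    (convexOn_nuclearNorm.smul hν₁) (convexOn_nuclearNorm.smul hν₂)
    (fun x => by simpa only [hadamardLeft_apply, mul_assoc] using hgrad x)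
    (prox hM (by ring)) (prox hM' (by ring)) C Mc

end Frobenius

theorem stmt7_general {N T : ℕ} (Y X : Matrix (Fin N) (Fin T) ℝ) (ν₁ ν₂ τ : ℝ)
    (hν₁ : 0 < ν₁) (hν₂ : 0 < ν₂) (hτ : 0 < τ) (hτX : ∀ i t, τ * X i t ^ 2 < 1)
    (Θ M : ℕ → Matrix (Fin N) (Fin T) ℝ)
    (hΘ : ∀ k, IsSVT (τ * ν₁ / 2) (Θ k - τ • (X ⊙ (X ⊙ Θ k - Y + M k))) (Θ (k + 1)))
    (hM : ∀ k, IsSVT (ν₂ / 2) (Y - X ⊙ Θ (k + 1)) (M (k + 1)))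
    (Θt Mt : Matrix (Fin N) (Fin T) ℝ) :
    ∀ k : ℕ, 1 ≤ k →
      Fobj Y X ν₁ ν₂ (Θ (k + 1)) (M (k + 1)) - Fobj Y X ν₁ ν₂ Θt Mt ≤
        1 / ((k : ℝ) * τ) * frobSq (Θ 1 - Θt) := by
  have step : ∀ j C Mc, τ * Fobj Y X ν₁ ν₂ (Θ (j + 2)) (M (j + 2)) ≤
      τ * Fobj Y X ν₁ ν₂ C Mc + frobSq (Θ (j + 1) - C) - frobSq (Θ (j + 2) - C) := fun j =>
    Fobj_step_le hν₁.le hν₂.le hτ.le (fun i t => (hτX i t).le) (hΘ (j + 1)) (hM j) (hM (j + 1))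
  set e : ℕ → ℝ := fun j => τ * Fobj Y X ν₁ ν₂ (Θ (j + 2)) (M (j + 2)) -
    τ * Fobj Y X ν₁ ν₂ Θt Mt
  have he : Antitone e := antitone_nat_of_succ_le fun j => by
    have := step (j + 1) (Θ (j + 2)) (M (j + 2))
    rw [sub_self, show frobSq (0 : Matrix (Fin N) (Fin T) ℝ) = 0 by simp [frobSq]] at this
    linarith [frobSq_nonneg (Θ (j + 1 + 2) - Θ (j + 2))]
  intro k hk
  obtain ⟨n, rfl⟩ := Nat.exists_eq_add_of_le' hk
  have := he.succ_mul_le_of_le_sub (fun j => frobSq_nonneg (Θ (j + 1) - Θt))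
    (fun j => by linarith [step j Θt Mt]) n
  rw [one_div, ← div_eq_inv_mul, le_div_iff₀ (by positivity)]
  push_cast
  linear_combination this

/-- O(1/k) convergence to the global minimum. If `(Θ̃, M̃)` is a global
minimizer of `F`, then under the SVT iteration with step size `τ ∈ (0, 1/max_{it} x_{it}²)`,
`F(Θ_{k+1}, M_{k+1}) − F(Θ̃, M̃) ≤ (1/(kτ)) ‖Θ₁ − Θ̃‖_F²` for all `k ≥ 1`. -/
theorem stmt7 {N T : ℕ} (Y X : Matrix (Fin N) (Fin T) ℝ) (ν₁ ν₂ τ : ℝ)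
    (hν₁ : 0 < ν₁) (hν₂ : 0 < ν₂) (hτ : 0 < τ) (hτX : ∀ i t, τ * X i t ^ 2 < 1)
    (Θ M : ℕ → Matrix (Fin N) (Fin T) ℝ)
    (hΘ : ∀ k, IsSVT (τ * ν₁ / 2) (Θ k - τ • (X ⊙ (X ⊙ Θ k - Y + M k))) (Θ (k + 1)))
    (hM : ∀ k, IsSVT (ν₂ / 2) (Y - X ⊙ Θ (k + 1)) (M (k + 1)))
    (Θt Mt : Matrix (Fin N) (Fin T) ℝ)
    (hmin : ∀ Θ' M' : Matrix (Fin N) (Fin T) ℝ, Fobj Y X ν₁ ν₂ Θt Mt ≤ Fobj Y X ν₁ ν₂ Θ' M') :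
    ∀ k : ℕ, 1 ≤ k →
      Fobj Y X ν₁ ν₂ (Θ (k + 1)) (M (k + 1)) - Fobj Y X ν₁ ν₂ Θt Mt ≤
        1 / ((k : ℝ) * τ) * frobSq (Θ 1 - Θt) :=
  stmt7_general Y X ν₁ ν₂ τ hν₁ hν₂ hτ hτX Θ M hΘ hM Θt Mt
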